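/- Junta learning lemma (SI Lemma 2 / Fact 3): with χ, Inf, χ' and D as in the context, the normalized Frobenius distance between χ and the induced T-junta process matrix χ' satisfies D(χ, χ') = (1/√2)·‖χ − χ'‖ ≤ √Inf + (√2/2)·Inf. -/

import Mathlib

/-!
Every entry of a positive semidefinite `χ` satisfies `|χ p q|² ≤ χ p p · χ q q`. Away from the
identity block `p.2 = q.2 = 0` the matrix `χ - χ'` agrees with `χ`, while on that block it is minus
the sum of the non-identity diagonal blocks, which Cauchy–Schwarz bounds by `g a · g b` with
`g a = ∑_{u ≠ 0} χ (a,u) (a,u)`. Writing `d` for the diagonal of `χ`, the squared Frobenius norm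
is therefore at most `(∑ d)² - (∑_a d (a,0))² + (∑ g)² = 1 - (1 - Inf)² + Inf² = 2 Inf`, so
already `D(χ, χ') ≤ √Inf`.
-/

open Finset ComplexOrder

/-- Frobenius norm of a complex matrix. -/
noncomputable def frobNorm {ι κ : Type*} [Fintype ι] [Fintype κ]
    (M : Matrix ι κ ℂ) : ℝ :=
  Real.sqrt (∑ x, ∑ y, ‖M x y‖ ^ 2)

/-- Influence of a process matrix `χ` (indexed by Pauli strings on `T` and on `T^c`)
on the complement `T^c`: the diagonal weight of strings acting non-trivially on `T^c`. -/
noncomputable def inflCompl (k m : ℕ)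
    (χ : Matrix ((Fin k → Fin 4) × (Fin m → Fin 4)) ((Fin k → Fin 4) × (Fin m → Fin 4)) ℂ) : ℝ :=
  ∑ p ∈ Finset.univ.filter
      (fun p : (Fin k → Fin 4) × (Fin m → Fin 4) => p.2 ≠ 0), (χ p p).re

/-- The `T`-junta process matrix induced by `χ`: sum the diagonal blocks over the
Pauli strings on `T^c` and place the result on the identity string of `T^c`. -/
noncomputable def juntaMatrix (k m : ℕ)
    (χ : Matrix ((Fin k → Fin 4) × (Fin m → Fin 4)) ((Fin k → Fin 4) × (Fin m → Fin 4)) ℂ) :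
    Matrix ((Fin k → Fin 4) × (Fin m → Fin 4)) ((Fin k → Fin 4) × (Fin m → Fin 4)) ℂ :=
  fun p q =>
    if p.2 = 0 ∧ q.2 = 0 then ∑ u : Fin m → Fin 4, χ (p.1, u) (q.1, u) else 0

namespace Matrix.PosSemidef

variable {𝕜 n : Type*} [RCLike 𝕜] {M : Matrix n n 𝕜}

theorem re_apply_self_nonneg (hM : M.PosSemidef) (p : n) : 0 ≤ RCLike.re (M p p) :=
  (RCLike.nonneg_iff.mp hM.diag_nonneg).1

theorem norm_apply_sq_le (hM : M.PosSemidef) (p q : n) :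
    ‖M p q‖ ^ 2 ≤ RCLike.re (M p p) * RCLike.re (M q q) := by
  have hdet := (hM.submatrix ![p, q]).det_nonneg
  rw [det_fin_two] at hdet
  simp only [submatrix_apply, cons_val_zero, cons_val_one] at hdet
  rw [← hM.1.apply q p, RCLike.star_def, RCLike.mul_conj, ← hM.1.coe_re_apply_self p,
    ← hM.1.coe_re_apply_self q] at hdet
  norm_cast at hdet
  simpa [sub_nonneg] using hdet

theorem norm_sum_apply_sq_le {ι : Type*} (hM : M.PosSemidef) (s : Finset ι) (i j : ι → n) :
    ‖∑ u ∈ s, M (i u) (j u)‖ ^ 2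
      ≤ (∑ u ∈ s, RCLike.re (M (i u) (i u))) * ∑ u ∈ s, RCLike.re (M (j u) (j u)) :=
  (pow_le_pow_left₀ (norm_nonneg _) (norm_sum_le _ _) 2).trans <|
    sum_sq_le_sum_mul_sum_of_sq_le_mul s (fun _ _ => hM.re_apply_self_nonneg _)
      (fun _ _ => hM.re_apply_self_nonneg _) (fun _ _ => hM.norm_apply_sq_le _ _)

end Matrix.PosSemidef

theorem sum_sum_ite_snd_eq_and_snd_eq {α β M : Type*} [Fintype α] [Fintype β] [DecidableEq β]
    [AddCommMonoid M] (z : β) (f : α × β → α × β → M) :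
    ∑ p, ∑ q, (if p.2 = z ∧ q.2 = z then f p q else 0) = ∑ a, ∑ b, f (a, z) (b, z) := by
  simp only [ite_and, sum_ite_irrel, Fintype.sum_prod_type, sum_ite_eq', mem_univ, if_true,
    sum_const_zero]

noncomputable def inflComplAt {k m : ℕ} (χ : Matrix ((Fin k → Fin 4) × (Fin m → Fin 4))
    ((Fin k → Fin 4) × (Fin m → Fin 4)) ℂ) (a : Fin k → Fin 4) : ℝ :=
  ∑ u ∈ univ.erase 0, (χ (a, u) (a, u)).re

section Junta

variable {k m : ℕ}
  {χ : Matrix ((Fin k → Fin 4) × (Fin m → Fin 4)) ((Fin k → Fin 4) × (Fin m → Fin 4)) ℂ}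

theorem inflCompl_eq_sum_inflComplAt : inflCompl k m χ = ∑ a, inflComplAt χ a := by
  rw [inflCompl, sum_filter, Fintype.sum_prod_type]
  refine sum_congr rfl fun a _ => ?_
  rw [inflComplAt, ← sum_filter, filter_ne']

theorem sum_re_diag_zero_add_inflCompl (htr : χ.trace = 1) :
    ∑ a, (χ (a, 0) (a, 0)).re + inflCompl k m χ = 1 := by
  rw [inflCompl_eq_sum_inflComplAt, ← sum_add_distrib]
  have hre := congrArg Complex.re htr
  rw [Matrix.trace, Complex.re_sum, Fintype.sum_prod_type, Complex.one_re] at hre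
  rw [← hre]
  exact sum_congr rfl fun a _ => add_sum_erase _ (fun u => (χ (a, u) (a, u)).re) (mem_univ 0)

theorem sub_juntaMatrix_apply_zero_zero (a b : Fin k → Fin 4) :
    (χ - juntaMatrix k m χ) (a, 0) (b, 0) = -∑ u ∈ univ.erase 0, χ (a, u) (b, u) := by
  rw [Matrix.sub_apply, juntaMatrix, if_pos ⟨rfl, rfl⟩,
    ← add_sum_erase _ (fun u => χ (a, u) (b, u)) (mem_univ 0)]
  ring

theorem sub_juntaMatrix_apply_of_not_zero_zero {p q : (Fin k → Fin 4) × (Fin m → Fin 4)}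
    (hpq : ¬(p.2 = 0 ∧ q.2 = 0)) : (χ - juntaMatrix k m χ) p q = χ p q := by
  rw [Matrix.sub_apply, juntaMatrix, if_neg hpq, sub_zero]

theorem norm_sub_juntaMatrix_apply_sq_le (hχ : χ.PosSemidef)
    (p q : (Fin k → Fin 4) × (Fin m → Fin 4)) :
    ‖(χ - juntaMatrix k m χ) p q‖ ^ 2 ≤ (χ p p).re * (χ q q).re +
      if p.2 = 0 ∧ q.2 = 0 then
        inflComplAt χ p.1 * inflComplAt χ q.1 - (χ p p).re * (χ q q).re
      else 0 := by
  obtain ⟨a, z⟩ := p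
  obtain ⟨b, w⟩ := q
  split_ifs with hpq
  · obtain ⟨rfl, rfl⟩ := hpq
    rw [sub_juntaMatrix_apply_zero_zero, norm_neg, add_sub_cancel]
    exact hχ.norm_sum_apply_sq_le _ (fun u => (a, u)) (fun u => (b, u))
  · rw [sub_juntaMatrix_apply_of_not_zero_zero hpq, add_zero]
    exact hχ.norm_apply_sq_le _ _

theorem sum_norm_sub_juntaMatrix_apply_sq_le (hχ : χ.PosSemidef) (htr : χ.trace = 1) :
    ∑ p, ∑ q, ‖(χ - juntaMatrix k m χ) p q‖ ^ 2 ≤ 2 * inflCompl k m χ := by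
  have hd : ∑ p, (χ p p).re = 1 := by
    simpa [Matrix.trace, Complex.re_sum] using congrArg Complex.re htr
  have hzero := sum_re_diag_zero_add_inflCompl htr
  calc ∑ p, ∑ q, ‖(χ - juntaMatrix k m χ) p q‖ ^ 2
      ≤ ∑ p, ∑ q, ((χ p p).re * (χ q q).re +
          if p.2 = 0 ∧ q.2 = 0 then
            inflComplAt χ p.1 * inflComplAt χ q.1 - (χ p p).re * (χ q q).re
          else 0) :=
        sum_le_sum fun p _ => sum_le_sum fun q _ => norm_sub_juntaMatrix_apply_sq_le hχ p q
    _ = (∑ p, (χ p p).re) ^ 2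
          + ((∑ a, inflComplAt χ a) ^ 2 - (∑ a, (χ (a, 0) (a, 0)).re) ^ 2) := by
        simp only [sum_add_distrib, sum_sum_ite_snd_eq_and_snd_eq, sum_sub_distrib, sq,
          sum_mul_sum]
    _ = 2 * inflCompl k m χ := by
        rw [hd, ← inflCompl_eq_sum_inflComplAt]
        linear_combination (inflCompl k m χ - ∑ a, (χ (a, 0) (a, 0)).re - 1) * hzero

end Junta

theorem junta_learning_lemma (k m : ℕ)
    (χ : Matrix ((Fin k → Fin 4) × (Fin m → Fin 4)) ((Fin k → Fin 4) × (Fin m → Fin 4)) ℂ)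
    (hpsd : χ.PosSemidef) (htr : χ.trace = 1) :
    (1 / Real.sqrt 2) * frobNorm (χ - juntaMatrix k m χ)
      ≤ Real.sqrt (inflCompl k m χ) + (Real.sqrt 2 / 2) * inflCompl k m χ := by
  have hI : 0 ≤ inflCompl k m χ := by
    rw [inflCompl_eq_sum_inflComplAt]
    exact sum_nonneg fun _ _ => sum_nonneg fun _ _ => hpsd.re_apply_self_nonneg _
  calc (1 / Real.sqrt 2) * frobNorm (χ - juntaMatrix k m χ)
      ≤ (1 / Real.sqrt 2) * Real.sqrt (2 * inflCompl k m χ) :=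
        mul_le_mul_of_nonneg_left
          (Real.sqrt_le_sqrt (sum_norm_sub_juntaMatrix_apply_sq_le hpsd htr)) (by positivity)
    _ = Real.sqrt (inflCompl k m χ) := by
        rw [Real.sqrt_mul zero_le_two]
        field_simp
    _ ≤ Real.sqrt (inflCompl k m χ) + (Real.sqrt 2 / 2) * inflCompl k m χ :=
        le_add_of_nonneg_right (by positivity)
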